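/- For every nonnegative integer r, the quiver Γ^{r+5}_{r,1,1} of coloured oriented single and paired diagonals of a regular (r+5)-gon is isomorphic as a stable translation quiver to Z D_{r+3}/⟨τ^{-(r+5)} ρ^{r+5}⟩, where ρ is the automorphism of Z D_{r+3} induced by the order-two diagram automorphism of D_{r+3}; this quotient is the Auslander–Reiten quiver of the orbit category D^b(mod kD_{r+3})/τ^{-3}Σ. -/

import Mathlib

/-!
Coloured oriented single and paired diagonals in a regular polygon, following
L. Lamberti, "Combinatorial model for the cluster categories of type E".

The vertices of the regular `m`-gon `Π` are labelled by `ZMod m` (clockwise).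
A coloured oriented diagonal `[i,j]_c` is encoded by the structure `Diag`;
the colour `P` encodes a *paired* diagonal `[i,j]_P = {[i,j]_R, [j,i]_B}`.
-/

inductive Colour : Type
  | R : Colour
  | B : Colour
  | P : Colour
deriving DecidableEq

/-- A coloured oriented (single or paired) diagonal `[i,j]_c` of the regular
`m`-gon (for `m = 0` we interpret `ZMod 0 = ℤ` as the infinite-sided polygon). -/
structure Diag (m : ℕ) where
  i : ZMod m
  j : ZMod m
  c : Colour
deriving DecidableEq

/-- The simultaneous change of colour and orientation:
`ρ([i,j]_R) = [j,i]_B`, `ρ([i,j]_B) = [j,i]_R`, `ρ([i,j]_P) = [i,j]_P`. -/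
def rho {m : ℕ} : Diag m → Diag m
  | ⟨i, j, Colour.R⟩ => ⟨j, i, Colour.B⟩
  | ⟨i, j, Colour.B⟩ => ⟨j, i, Colour.R⟩
  | ⟨i, j, Colour.P⟩ => ⟨i, j, Colour.P⟩

/-- The anticlockwise rotation `[i,j]_c ↦ [i-1,j-1]_c`. -/
def shiftD {m : ℕ} (d : Diag m) : Diag m := ⟨d.i - 1, d.j - 1, d.c⟩

/-- The slice of `Π_{r,s,t}` based at the vertex `i` of `Π`:
the paired diagonals `[i,i+2]_P, …, [i,i+r+2]_P`, the red single diagonals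
`[i,i+r+3]_R, …, [i,i+r+s+2]_R` and the blue single diagonals
`[i+r+3,i]_B, …, [i+r+t+2,i]_B`. -/
def PiSetAt (r s t : ℕ) {m : ℕ} (i : ZMod m) : Set (Diag m) :=
  {d | (∃ k : ℕ, 2 ≤ k ∧ k ≤ r + 2 ∧ d = ⟨i, i + (k : ZMod m), Colour.P⟩) ∨
       (∃ k : ℕ, r + 3 ≤ k ∧ k ≤ r + s + 2 ∧ d = ⟨i, i + (k : ZMod m), Colour.R⟩) ∨
       (∃ k : ℕ, r + 3 ≤ k ∧ k ≤ r + t + 2 ∧ d = ⟨i + (k : ZMod m), i, Colour.B⟩)}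

/-- The set `Π_{r,s,t}` of coloured oriented single and paired diagonals of the
regular `m`-gon associated to the tree `T_{r,s,t}`. -/
def PiSet (r s t m : ℕ) : Set (Diag m) := ⋃ i : ZMod m, PiSetAt r s t i

open Classical in
/-- The translation `τ` on coloured oriented diagonals: the anticlockwise
rotation `[i,j]_c ↦ [i-1,j-1]_c`, composed with `ρ^{m}` on the first slice
`Π_{r,s,t}|_1` when the tree is symmetric (`s = t`). -/
noncomputable def tauD (r s t : ℕ) {m : ℕ} (d : Diag m) : Diag m :=
  if s = t ∧ d ∈ PiSetAt r s t (1 : ZMod m) then rho^[m] (shiftD d) else shiftD d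

/-- Minimal clockwise rotations (before the colour adjustment at the seam):
`[k,l]_c → [k,l+1]_c`, `[k,l]_c → [k+1,l]_c`, together with
`[k,k+r+2]_P → [k,k+r+3]_R`, `[k,k+r+2]_P → [k+r+3,k]_B`,
`[k,k+r+3]_R → [k+1,k+r+3]_P` and `[k+r+3,k]_B → [k+1,k+r+3]_P`. -/
def Rot (r : ℕ) {m : ℕ} (a b : Diag m) : Prop :=
  b = ⟨a.i, a.j + 1, a.c⟩ ∨ b = ⟨a.i + 1, a.j, a.c⟩ ∨
  (∃ k : ZMod m, a = ⟨k, k + ((r : ZMod m) + 2), Colour.P⟩ ∧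
    (b = ⟨k, k + ((r : ZMod m) + 3), Colour.R⟩ ∨
     b = ⟨k + ((r : ZMod m) + 3), k, Colour.B⟩)) ∨
  (∃ k : ZMod m,
    (a = ⟨k, k + ((r : ZMod m) + 3), Colour.R⟩ ∨
     a = ⟨k + ((r : ZMod m) + 3), k, Colour.B⟩) ∧
    b = ⟨k + 1, k + ((r : ZMod m) + 3), Colour.P⟩)

/-- In the symmetric case `s = t` with an odd-sided polygon, the arrows whose
source lies in `τ(Π_{r,t,t}|_1)` and whose (unadjusted) target lies in the
first slice `Π_{r,t,t}|_1` additionally change colour and orientation. -/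
def SeamTwist (r s t m : ℕ) (a b₀ : Diag m) : Prop :=
  s = t ∧ Odd m ∧ a ∈ (tauD r s t) '' (PiSetAt r s t (1 : ZMod m)) ∧
    b₀ ∈ PiSetAt r s t (1 : ZMod m)

/-- The arrows of the quiver `Γ^{m}_{r,s,t}`: minimal clockwise rotations
between elements of `Π_{r,s,t}`, adjusted by `ρ` at the seam. -/
def ArrowD (r s t m : ℕ) (a b : Diag m) : Prop :=
  a ∈ PiSet r s t m ∧ b ∈ PiSet r s t m ∧
    ∃ b₀, Rot r a b₀ ∧
      ((SeamTwist r s t m a b₀ ∧ b = rho b₀) ∨ (¬ SeamTwist r s t m a b₀ ∧ b = b₀))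

/-- The vertices of the tree `T_{r,s,t}`: a central vertex together with three
legs having `r`, `s`, `t` vertices respectively. -/
inductive TVert (r s t : ℕ) : Type
  | center : TVert r s t
  | legA : Fin r → TVert r s t
  | legB : Fin s → TVert r s t
  | legC : Fin t → TVert r s t
deriving DecidableEq

/-- An orientation of the tree `T_{r,s,t}`: the `A`-leg points towards the
centre, the `B`- and `C`-legs point away from it. -/
def TArrow {r s t : ℕ} (x y : TVert r s t) : Prop :=
  (∃ k l : Fin r, (l : ℕ) + 1 = (k : ℕ) ∧ x = TVert.legA k ∧ y = TVert.legA l) ∨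
  (∃ k : Fin r, (k : ℕ) = 0 ∧ x = TVert.legA k ∧ y = TVert.center) ∨
  (∃ k : Fin s, (k : ℕ) = 0 ∧ x = TVert.center ∧ y = TVert.legB k) ∨
  (∃ k l : Fin s, (k : ℕ) + 1 = (l : ℕ) ∧ x = TVert.legB k ∧ y = TVert.legB l) ∨
  (∃ k : Fin t, (k : ℕ) = 0 ∧ x = TVert.center ∧ y = TVert.legC k) ∨
  (∃ k l : Fin t, (k : ℕ) + 1 = (l : ℕ) ∧ x = TVert.legC k ∧ y = TVert.legC l)

/-- The order-two graph automorphism of a symmetric tree `T_{r,t,t}`,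
exchanging its two legs of length `t`. -/
def treeRho {r t : ℕ} : TVert r t t → TVert r t t
  | TVert.center => TVert.center
  | TVert.legA k => TVert.legA k
  | TVert.legB k => TVert.legC k
  | TVert.legC k => TVert.legB k

/-- `treeRho` as a permutation. -/
def treeRhoPerm (r t : ℕ) : Equiv.Perm (TVert r t t) :=
  Function.Involutive.toPerm treeRho (by intro x; cases x <;> rfl)

/-- The translation of the repetitive quiver `ℤQ`: `τ(m,i) = (m-1,i)`. -/
def ZTau {V : Type} (x : ℤ × V) : ℤ × V := (x.1 - 1, x.2)

/-- The arrows of the repetitive quiver `ℤQ` of a quiver with arrow relation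
`A`: for each arrow `i → j` of `Q` there are arrows `(m,i) → (m,j)` and
`(m,j) → (m+1,i)`. -/
def ZArrow {V : Type} (A : V → V → Prop) (x y : ℤ × V) : Prop :=
  (y.1 = x.1 ∧ A x.2 y.2) ∨ (y.1 = x.1 + 1 ∧ A y.2 x.2)

/-- The automorphism `τ^{-m} σ` of `ℤQ` given by shifting `m` steps to the
right and applying the graph automorphism `σ` of `Q`. -/
def shiftPerm {V : Type} (m : ℕ) (σ : Equiv.Perm V) : Equiv.Perm (ℤ × V) :=
  (Equiv.addRight (m : ℤ)).prodCongr σ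

/-- `φ` exhibits the quiver `Γ^{m}_{r,s,t}` (with vertex set `PiSet r s t m`,
arrow relation `ArrowD` and translation `tauD`) as the quotient of the
repetitive quiver `ℤQ` (with arrow relation `ZArrow A` and translation `ZTau`)
by the cyclic group generated by the automorphism `g`, as stable translation
quivers: `φ` is surjective onto the vertex set, its fibres are exactly the
`g`-orbits, it commutes with the translations, and the arrows of
`Γ^{m}_{r,s,t}` correspond exactly to the `g`-orbits of arrows of `ℤQ`. -/
def IsQuotientIso (r s t m : ℕ) {V : Type} (A : V → V → Prop)
    (g : Equiv.Perm (ℤ × V)) (φ : ℤ × V → Diag m) : Prop :=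
  (∀ x, φ x ∈ PiSet r s t m) ∧
  (∀ d ∈ PiSet r s t m, ∃ x, φ x = d) ∧
  (∀ x y, φ x = φ y ↔ ∃ k : ℤ, (g ^ k) x = y) ∧
  (∀ x, φ (ZTau x) = tauD r s t (φ x)) ∧
  (∀ x y, ArrowD r s t m (φ x) (φ y) ↔
    ∃ y', (∃ k : ℤ, (g ^ k) y = y') ∧ ZArrow A x y')

/-!
The quotient of `ℤ D_{r+3}` by `⟨τ^{-m} σ⟩`, `m = r + 5`, `σ = ρ^m`, is a twisted cylinder
`ZMod m × D_{r+3}`: read the sheet index of `(n, v)` off `n` and untwist `v` by the matching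
power of `σ`; the translation lowers the slice index and applies `σ` when passing from slice `1`
to slice `0`. On the polygon side, the slice `Π_{r,1,1}|_i` is a copy of `D_{r+3}`, indexed by
the number of edges its diagonals span, and a minimal clockwise rotation of a diagonal of slice
`i` either stays in slice `i` and spans one edge more, or moves to slice `i + 1` and spans one
edge less:
these are exactly the arrows of the cylinder. Spans are `ρ`-invariant, so the `ρ`-twist of
the arrows at the seam is invisible, and the twist of `τ` on the first slice is the cylinder's.
-/

lemma Int.sub_one_ediv (a : ℤ) {b : ℤ} (hb : 0 < b) :
    (a - 1) / b = if b ∣ a then a / b - 1 else a / b := by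
  rw [Int.ediv_eq_iff_of_pos hb]
  have hle := Int.ediv_mul_le a hb.ne'
  have hlt := Int.lt_ediv_add_one_mul_self a hb
  split_ifs with h
  · have hq : a / b * b = a := Int.ediv_mul_cancel h
    constructor <;> linarith [sub_mul (a / b) 1 b]
  · have hq : a / b * b ≠ a := fun hq => h ⟨a / b, by linarith⟩
    constructor <;> linarith [lt_of_le_of_ne hle hq]

lemma Equiv.Perm.zpow_apply_iff {α : Type*} {σ : Equiv.Perm α} {P : α → Prop}
    (h : ∀ a, P (σ a) ↔ P a) (k : ℤ) (a : α) : P ((σ ^ k) a) ↔ P a := by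
  induction k using Int.induction_on generalizing a with
  | zero => rfl
  | succ k ih => rw [zpow_add_one, Equiv.Perm.mul_apply, ih, h]
  | pred k ih =>
    rw [zpow_sub_one, Equiv.Perm.mul_apply, ih, ← h, Equiv.Perm.coe_inv, Equiv.apply_symm_apply]

lemma ZMod.natCast_eq_natCast_iff_of_lt_two_mul {m a b : ℕ} (ha : a < 2 * m) (hb : b < 2 * m) :
    (a : ZMod m) = b ↔ a = b ∨ a = b + m ∨ b = a + m := by
  rw [ZMod.natCast_eq_natCast_iff']
  rcases lt_or_ge a m with ha' | ha' <;> rcases lt_or_ge b m with hb' | hb'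
  · rw [Nat.mod_eq_of_lt ha', Nat.mod_eq_of_lt hb']; omega
  · rw [Nat.mod_eq_of_lt ha', Nat.mod_eq_sub_mod hb', Nat.mod_eq_of_lt (by omega)]; omega
  · rw [Nat.mod_eq_of_lt hb', Nat.mod_eq_sub_mod ha', Nat.mod_eq_of_lt (by omega)]; omega
  · rw [Nat.mod_eq_sub_mod hb', Nat.mod_eq_sub_mod ha', Nat.mod_eq_of_lt (by omega),
      Nat.mod_eq_of_lt (by omega)]; omega

lemma ZMod.intCast_eq_intCast_iff_exists_add_mul {m : ℕ} (a b : ℤ) :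
    (a : ZMod m) = b ↔ ∃ k : ℤ, a + k * m = b := by
  rw [ZMod.intCast_eq_intCast_iff_dvd_sub]
  exact ⟨fun ⟨k, hk⟩ => ⟨k, by linarith⟩, fun ⟨k, hk⟩ => ⟨k, by linarith⟩⟩

section TwistedCylinder

variable {V : Type} {m : ℕ}

lemma shiftPerm_zpow_apply (σ : Equiv.Perm V) (k : ℤ) (x : ℤ × V) :
    (shiftPerm m σ ^ k) x = (x.1 + k * m, (σ ^ k) x.2) := by
  induction k using Int.induction_on generalizing x with
  | zero => simp
  | succ k ih =>
    rw [zpow_add_one, Equiv.Perm.mul_apply, ih, zpow_add_one, Equiv.Perm.mul_apply]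
    simp only [shiftPerm, Equiv.prodCongr_apply, Prod.map, Equiv.coe_addRight]
    ring_nf
  | pred k ih =>
    rw [zpow_sub_one, Equiv.Perm.mul_apply, ih, zpow_sub_one, Equiv.Perm.mul_apply]
    simp only [shiftPerm, Equiv.Perm.inv_def, Equiv.prodCongr_symm, Equiv.addRight_symm,
      Equiv.prodCongr_apply, Equiv.coe_addRight, Prod.map, zpow_neg, zpow_natCast, Prod.mk.injEq,
      and_true]
    ring

/-- The sheet index `⌊(n - 1) / m⌋` makes `{1, …, m}` the fundamental domain, so the twist
by `σ` happens between the slices `1` and `0`. -/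
def cylinderMap (m : ℕ) (σ : Equiv.Perm V) (x : ℤ × V) : ZMod m × V :=
  (x.1, (σ ^ (-((x.1 - 1) / m))) x.2)

def cylinderTau (σ : Equiv.Perm V) (p : ZMod m × V) : ZMod m × V :=
  (p.1 - 1, if p.1 = 1 then σ p.2 else p.2)

def CylinderArrow (A : V → V → Prop) (p q : ZMod m × V) : Prop :=
  (q.1 = p.1 ∧ A p.2 q.2) ∨ (q.1 = p.1 + 1 ∧ A q.2 p.2)

lemma cylinderMap_surjective (σ : Equiv.Perm V) : Function.Surjective (cylinderMap m σ) := by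
  rintro ⟨i, a⟩
  refine ⟨((i.cast : ℤ), (σ ^ ((i.cast - 1) / (m : ℤ))) a), ?_⟩
  simp [cylinderMap, ← Equiv.Perm.mul_apply]

lemma cylinderMap_shiftPerm_zpow [NeZero m] (σ : Equiv.Perm V) (k : ℤ) (x : ℤ × V) :
    cylinderMap m σ ((shiftPerm m σ ^ k) x) = cylinderMap m σ x := by
  have hsheet : (x.1 + k * m - 1) / m = (x.1 - 1) / m + k := by
    rw [add_sub_right_comm, Int.add_mul_ediv_right _ _ (by exact_mod_cast NeZero.ne m)]
  simp only [cylinderMap, shiftPerm_zpow_apply, hsheet, Prod.mk.injEq]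
  refine ⟨by simp, ?_⟩
  rw [← Equiv.Perm.mul_apply, ← zpow_add, neg_add, neg_add_cancel_right]

lemma cylinderMap_eq_iff [NeZero m] (σ : Equiv.Perm V) (x y : ℤ × V) :
    cylinderMap m σ x = cylinderMap m σ y ↔ ∃ k : ℤ, (shiftPerm m σ ^ k) x = y := by
  refine ⟨fun h => ?_, fun ⟨k, hk⟩ => hk ▸ (cylinderMap_shiftPerm_zpow σ k x).symm⟩
  obtain ⟨k, hk⟩ := (ZMod.intCast_eq_intCast_iff_dvd_sub x.1 y.1 m).1 (congrArg Prod.fst h)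
  refine ⟨k, ?_⟩
  rw [← cylinderMap_shiftPerm_zpow σ k x] at h
  have h1 : ((shiftPerm m σ ^ k) x).1 = y.1 := by
    rw [shiftPerm_zpow_apply]; linarith
  refine Prod.ext h1 ((σ ^ (-((y.1 - 1) / (m : ℤ)))).injective ?_)
  simpa [cylinderMap, h1] using congrArg Prod.snd h

lemma cylinderMap_zTau [NeZero m] (σ : Equiv.Perm V) (x : ℤ × V) :
    cylinderMap m σ (ZTau x) = cylinderTau σ (cylinderMap m σ x) := by
  have hseam : ((x.1 : ZMod m) = 1) ↔ (m : ℤ) ∣ x.1 - 1 := by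
    rw [← Int.cast_one, ZMod.intCast_eq_intCast_iff_dvd_sub, ← dvd_neg, neg_sub]
  have hsheet := Int.sub_one_ediv (x.1 - 1) (b := m) (by exact_mod_cast Nat.pos_of_neZero m)
  simp only [cylinderMap, cylinderTau, ZTau, Int.cast_sub, Int.cast_one, hseam, hsheet]
  split_ifs <;> simp [sub_eq_add_neg, zpow_add]

lemma exists_zArrow_iff_cylinderArrow (σ : Equiv.Perm V) {A : V → V → Prop}
    (hA : ∀ a b, A (σ a) b ↔ A a b) (hA' : ∀ a b, A a (σ b) ↔ A a b) (x y : ℤ × V) :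
    (∃ y', (∃ k : ℤ, (shiftPerm m σ ^ k) y = y') ∧ ZArrow A x y') ↔
      CylinderArrow A (cylinderMap m σ x) (cylinderMap m σ y) := by
  have hL (b : V) (k : ℤ) (a : V) : A ((σ ^ k) a) b ↔ A a b :=
    Equiv.Perm.zpow_apply_iff (P := (A · b)) (fun a => hA a b) k a
  have hR (a : V) (k : ℤ) (b : V) : A a ((σ ^ k) b) ↔ A a b :=
    Equiv.Perm.zpow_apply_iff (P := A a) (hA' a) k b
  rw [CylinderArrow, cylinderMap, cylinderMap, ← Int.cast_one (R := ZMod m), ← Int.cast_add]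
  simp only [exists_exists_eq_and, ZArrow, shiftPerm_zpow_apply, hL, hR,
    ZMod.intCast_eq_intCast_iff_exists_add_mul, exists_or, exists_and_right]

end TwistedCylinder

lemma rho_involutive {m : ℕ} : Function.Involutive (rho (m := m)) := by
  rintro ⟨i, j, c⟩
  cases c <;> rfl

lemma rho_mem_PiSetAt_iff {r t m : ℕ} {i : ZMod m} {d : Diag m} :
    rho d ∈ PiSetAt r t t i ↔ d ∈ PiSetAt r t t i := by
  obtain ⟨a, b, c⟩ := d
  cases c <;> simp [PiSetAt, rho, and_comm]

lemma seamTwist_rho_iff {r t m : ℕ} {a b : Diag m} :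
    SeamTwist r t t m a (rho b) ↔ SeamTwist r t t m a b := by
  simp only [SeamTwist, rho_mem_PiSetAt_iff]

lemma arrowD_iff_of_rot_rho_iff {r t m : ℕ} {a b : Diag m}
    (h : Rot r a (rho b) ↔ Rot r a b) :
    ArrowD r t t m a b ↔ a ∈ PiSet r t t m ∧ b ∈ PiSet r t t m ∧ Rot r a b := by
  refine and_congr_right fun _ => and_congr_right fun _ => ⟨?_, fun hrot => ?_⟩
  · rintro ⟨b₀, hrot, ⟨-, rfl⟩ | ⟨-, rfl⟩⟩
    · rwa [← h, rho_involutive]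
    · exact hrot
  · by_cases hseam : SeamTwist r t t m a b
    · exact ⟨rho b, h.2 hrot, Or.inl ⟨seamTwist_rho_iff.2 hseam, (rho_involutive b).symm⟩⟩
    · exact ⟨b, hrot, Or.inr ⟨hseam, rfl⟩⟩

namespace TVert

variable {r : ℕ}

/-- The number of polygon edges spanned by the diagonals attached to a vertex of `D_{r+3}`. -/
def span : TVert r 1 1 → ℕ
  | legA k => r + 1 - k
  | center => r + 2
  | legB _ => r + 3
  | legC _ => r + 3

lemma tArrow_iff_span {v w : TVert r 1 1} : TArrow v w ↔ w.span = v.span + 1 := by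
  cases v <;> cases w <;>
    simp only [TArrow, span, legA.injEq, legB.injEq, legC.injEq, reduceCtorEq, Fin.val_eq_zero,
      exists_eq', exists_eq_right', exists_eq_right_right', exists_const, exists_false, and_self,
      and_true, and_false, true_and, false_and, or_self, or_true, or_false, false_or, false_iff,
      zero_add, one_ne_zero, OfNat.ofNat_ne_zero, Nat.left_eq_add, Nat.add_right_cancel_iff,
      Nat.reduceEqDiff] <;>
    omega

lemma span_treeRho (v : TVert r 1 1) : (treeRho v).span = v.span := by
  cases v <;> rfl

lemma span_treeRhoPerm_pow (n : ℕ) (v : TVert r 1 1) :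
    ((treeRhoPerm r 1 ^ n) v).span = v.span := by
  rw [← Equiv.Perm.iterate_eq_pow]
  exact congrFun (Function.iterate_invariant (g := span) (funext span_treeRho) n) v

lemma tArrow_treeRhoPerm_pow_left (n : ℕ) (v w : TVert r 1 1) :
    TArrow ((treeRhoPerm r 1 ^ n) v) w ↔ TArrow v w := by
  simp only [tArrow_iff_span, span_treeRhoPerm_pow]

lemma tArrow_treeRhoPerm_pow_right (n : ℕ) (v w : TVert r 1 1) :
    TArrow v ((treeRhoPerm r 1 ^ n) w) ↔ TArrow v w := by
  simp only [tArrow_iff_span, span_treeRhoPerm_pow]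

end TVert

open TVert

def cylinderDiag (r : ℕ) : ZMod (r + 5) × TVert r 1 1 → Diag (r + 5)
  | (i, legB _) => ⟨i, i + (r + 3 : ℕ), .R⟩
  | (i, legC _) => ⟨i + (r + 3 : ℕ), i, .B⟩
  | (i, v) => ⟨i, i + v.span, .P⟩

section CylinderDiag

variable {r : ℕ}

lemma cylinderDiag_injective : Function.Injective (cylinderDiag r) := by
  rintro ⟨i, v⟩ ⟨j, w⟩ h
  obtain rfl : i = j := by cases v <;> cases w <;> simp_all [cylinderDiag]
  cases v <;> cases w <;>
    simp only [cylinderDiag, span, Nat.cast_add, Nat.cast_ofNat, Diag.mk.injEq, add_right_inj,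
      left_eq_add, add_eq_left, Prod.mk.injEq, reduceCtorEq, and_false, and_true, true_and,
      and_self, legA.injEq, legB.injEq, legC.injEq, Fin.ext_iff, Fin.val_eq_zero] at h ⊢ <;>
    norm_cast at h <;>
    simp (disch := omega) only [ZMod.natCast_eq_natCast_iff_of_lt_two_mul] at h <;> omega

lemma mem_PiSetAt_iff {i : ZMod (r + 5)} {d : Diag (r + 5)} :
    d ∈ PiSetAt r 1 1 i ↔ ∃ v, cylinderDiag r (i, v) = d := by
  constructor
  · rintro (⟨k, hk, hk', rfl⟩ | ⟨k, hk, hk', rfl⟩ | ⟨k, hk, hk', rfl⟩)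
    · obtain rfl | hk' := eq_or_lt_of_le hk'
      · exact ⟨center, rfl⟩
      · refine ⟨legA ⟨r + 1 - k, by omega⟩, ?_⟩
        simp only [cylinderDiag, span]
        rw [Nat.sub_sub_self (by omega)]
    · exact ⟨legB 0, by rw [show k = r + 3 by omega]; rfl⟩
    · exact ⟨legC 0, by rw [show k = r + 3 by omega]; rfl⟩
  · rintro ⟨v, rfl⟩
    cases v with
    | legA k => exact Or.inl ⟨r + 1 - k, by omega, by omega, rfl⟩
    | center => exact Or.inl ⟨r + 2, by omega, le_rfl, rfl⟩
    | legB _ => exact Or.inr (Or.inl ⟨r + 3, le_rfl, le_rfl, rfl⟩)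
    | legC _ => exact Or.inr (Or.inr ⟨r + 3, le_rfl, le_rfl, rfl⟩)

lemma range_cylinderDiag : Set.range (cylinderDiag r) = PiSet r 1 1 (r + 5) := by
  ext d
  simp [PiSet, mem_PiSetAt_iff]

lemma rho_cylinderDiag (p : ZMod (r + 5) × TVert r 1 1) :
    rho (cylinderDiag r p) = cylinderDiag r (p.1, treeRho p.2) := by
  obtain ⟨i, v⟩ := p
  cases v <;> rfl

lemma iterate_rho_cylinderDiag (n : ℕ) (p : ZMod (r + 5) × TVert r 1 1) :
    rho^[n] (cylinderDiag r p) = cylinderDiag r (p.1, (treeRhoPerm r 1 ^ n) p.2) := by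
  have h : Function.Semiconj (fun v => cylinderDiag r (p.1, v)) treeRho rho :=
    fun v => (rho_cylinderDiag (p.1, v)).symm
  rw [← Equiv.Perm.iterate_eq_pow]
  exact (h.iterate_right n p.2).symm

lemma shiftD_cylinderDiag (p : ZMod (r + 5) × TVert r 1 1) :
    shiftD (cylinderDiag r p) = cylinderDiag r (p.1 - 1, p.2) := by
  obtain ⟨i, v⟩ := p
  cases v <;> simp only [cylinderDiag, shiftD, Diag.mk.injEq, and_true, true_and] <;> ring

lemma tauD_cylinderDiag (p : ZMod (r + 5) × TVert r 1 1) :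
    tauD r 1 1 (cylinderDiag r p) =
      cylinderDiag r (cylinderTau (treeRhoPerm r 1 ^ (r + 5)) p) := by
  have hslice : cylinderDiag r p ∈ PiSetAt r 1 1 1 ↔ p.1 = 1 := by
    rw [mem_PiSetAt_iff]
    exact ⟨fun ⟨w, hw⟩ => (congrArg Prod.fst (cylinderDiag_injective hw)).symm,
      fun h => ⟨p.2, by rw [← h]⟩⟩
  simp only [tauD, cylinderTau, true_and, hslice]
  split_ifs <;> simp [shiftD_cylinderDiag, iterate_rho_cylinderDiag]

lemma rot_cylinderDiag_iff (p q : ZMod (r + 5) × TVert r 1 1) :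
    Rot r (cylinderDiag r p) (cylinderDiag r q) ↔ CylinderArrow TArrow p q := by
  obtain ⟨i, v⟩ := p
  obtain ⟨j, w⟩ := q
  obtain ⟨d, hd, rfl⟩ : ∃ d : ℕ, d < r + 5 ∧ i + d = j :=
    ⟨(j - i).val, ZMod.val_lt _, by simp⟩
  simp only [CylinderArrow, tArrow_iff_span]
  -- every equation is one in `ZMod (r + 5)` between naturals below `2 * (r + 5)`
  cases v <;> cases w <;>
    simp only [Rot, cylinderDiag, span, Nat.cast_add, Nat.cast_ofNat, add_assoc, Diag.mk.injEq,
      add_eq_left, add_right_inj, and_true, add_eq_right, add_left_inj, and_self, reduceCtorEq,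
      and_false, or_self, exists_const, false_and, or_false, Nat.reduceAdd,
      Nat.reduceEqDiff, iff_false, not_or, not_and, exists_eq_left',
      false_or, existsAndEq, true_and, exists_eq_right_right', left_eq_add, and_iff_left_iff_imp] <;>
    norm_cast <;>
    simp only [← Nat.cast_zero (R := ZMod (r + 5)), ← Nat.cast_one (R := ZMod (r + 5))] <;>
    simp (disch := omega) only [ZMod.natCast_eq_natCast_iff_of_lt_two_mul] <;> omega

lemma arrowD_cylinderDiag_iff (p q : ZMod (r + 5) × TVert r 1 1) :
    ArrowD r 1 1 (r + 5) (cylinderDiag r p) (cylinderDiag r q) ↔ CylinderArrow TArrow p q := by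
  rw [arrowD_iff_of_rot_rho_iff, rot_cylinderDiag_iff, ← range_cylinderDiag]
  · simp
  · rw [rho_cylinderDiag, rot_cylinderDiag_iff, rot_cylinderDiag_iff]
    simp only [CylinderArrow, tArrow_iff_span, span_treeRho]

end CylinderDiag

/-- Corollary 4.3, type `D`. For every nonnegative integer
`r`, the quiver `Γ^{r+5}_{r,1,1}` of coloured oriented single and paired
diagonals of a regular `(r+5)`-gon is isomorphic, as a stable translation
quiver, to `ℤ D_{r+3} / ⟨τ^{-(r+5)} ρ^{r+5}⟩`, where `D_{r+3} = T_{r,1,1}`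
and `ρ` is the automorphism of `ℤ D_{r+3}` induced by the order-two diagram
automorphism of `D_{r+3}`.  (This quotient is the AR-quiver of the orbit
category `D^b(mod k D_{r+3})/τ^{-3}Σ`.) -/
theorem gamma_iso_ZD_quotient (r : ℕ) :
    ∃ φ : ℤ × TVert r 1 1 → Diag (r + 5),
      IsQuotientIso r 1 1 (r + 5) TArrow
        (shiftPerm (r + 5) ((treeRhoPerm r 1) ^ (r + 5))) φ := by
  set σ := treeRhoPerm r 1 ^ (r + 5)
  refine ⟨cylinderDiag r ∘ cylinderMap (r + 5) σ, fun x => ?_, fun d hd => ?_, fun x y => ?_,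
    fun x => ?_, fun x y => ?_⟩ <;> simp only [Function.comp_apply]
  · rw [← range_cylinderDiag]
    exact Set.mem_range_self _
  · rw [← range_cylinderDiag] at hd
    obtain ⟨p, rfl⟩ := hd
    obtain ⟨x, rfl⟩ := cylinderMap_surjective σ p
    exact ⟨x, rfl⟩
  · rw [cylinderDiag_injective.eq_iff, cylinderMap_eq_iff]
  · rw [cylinderMap_zTau, tauD_cylinderDiag]
  · rw [arrowD_cylinderDiag_iff, exists_zArrow_iff_cylinderArrow σ
      (tArrow_treeRhoPerm_pow_left _) (tArrow_treeRhoPerm_pow_right _)]
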